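/- arXiv:2101.05354 — 2 statements merged into one kernel-verified Lean document; each statement's English description precedes it below -/
import Mathlib

section
/- For all A, r ∈ ℕ and ε > 0 there exists δ > 0 such that the following holds. Suppose (n_1,…,n_r) is A-balanced and Λ is connected and ε-separated. Let y_1,…,y_r be an orthonormal eigenbasis of Λ with y_1 a nonnegative eigenvector for the largest eigenvalue, let x_j = D^{−1/2} y_j, and for a vector z ∈ [0,∞)^r write z = Σ_j α_j x_j with α_j = ⟨D^{1/2} z, y_j⟩. Then ‖α_1 x_1‖₂ ≥ δ·‖z‖₂. -/
/-!
Write `Y = y₁`. The Perron component of `z` is the vector with coordinates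
`α₁ Y k / √n_k`, where `α₁ = ∑ₗ √n_l z_l Y l`. If every coordinate of `Y` is at least some
`c = c(ε, r) > 0`, then for any fixed `k` that coordinate is at least
`c² ∑ₗ √(n_l / n_k) z_l ≥ c² / √(A + 1) ∑ₗ z_l ≥ c² / √(A + 1) ‖z‖₂`, by balance and because
`z ≥ 0`. Such a `c` exists by a Perron–Frobenius argument: some coordinate of the unit vector
`Y` is at least `1 / r`, the eigenvalue is at most `r² / ε`, and the eigen-equation at an edge
`Λ v u ≥ ε` of the connected type graph gives `Y v ≥ (ε² / r²) Y u`; paths have fewer than `r`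
edges, whence `c = (ε² / r²)ʳ / r` (capped at `1` per edge).
-/

open MeasureTheory Matrix

namespace Pandemic

variable {r : ℕ}

/-- The vertex set: `n i` vertices of each type `i`. -/
abbrev Vert (n : Fin r → ℕ) : Type := (i : Fin r) × Fin (n i)

/-- The largest (real) eigenvalue of a matrix. -/
noncomputable def maxEig (M : Matrix (Fin r) (Fin r) ℝ) : ℝ :=
  sSup {t : ℝ | Module.End.HasEigenvalue (Matrix.toLin' M) t}

/-- `(n_1,…,n_r)` is `A`-balanced if `n i ≤ A * n j` for all `i, j`. -/
def Balanced (A : ℕ) (n : Fin r → ℕ) : Prop := ∀ i j, n i ≤ A * n j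

/-- `Λ` is `ε`-separated: every entry is `0` or lies in `[ε, 1/ε]`. -/
def Separated (ε : ℝ) (Λ : Matrix (Fin r) (Fin r) ℝ) : Prop :=
  ∀ i j, Λ i j = 0 ∨ (ε ≤ Λ i j ∧ Λ i j ≤ 1 / ε)

/-- The graph on types: `i ~ j` iff `Λ i j > 0` (symmetrized). -/
def typeGraph (Λ : Matrix (Fin r) (Fin r) ℝ) : SimpleGraph (Fin r) where
  Adj i j := i ≠ j ∧ (0 < Λ i j ∨ 0 < Λ j i)
  symm := by
    constructor
    intro i j h
    exact ⟨h.1.symm, h.2.symm⟩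
  loopless := by constructor; intro i h; exact h.1 rfl

/-- `Λ` is connected if the graph on types with edges at positive entries is connected. -/
def ConnectedTypes (Λ : Matrix (Fin r) (Fin r) ℝ) : Prop := (typeGraph Λ).Connected

/-- The matrix of infection probabilities `p i j = Λ i j / √(n i * n j)`. -/
noncomputable def pMat (n : Fin r → ℕ) (Λ : Matrix (Fin r) (Fin r) ℝ) :
    Matrix (Fin r) (Fin r) ℝ :=
  fun i j => Λ i j / Real.sqrt ((n i : ℝ) * (n j : ℝ))

/-- The descendants matrix `M i j = p i j * n j`. -/
noncomputable def mMat (n : Fin r → ℕ) (Λ : Matrix (Fin r) (Fin r) ℝ) :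
    Matrix (Fin r) (Fin r) ℝ :=
  fun i j => pMat n Λ i j * (n j : ℝ)

/-- The product Bernoulli measure on edge-indicators: the (unordered) pair `{u, v}`
is an edge independently with probability `p (type u) (type v)`. -/
noncomputable def graphMeasure (n : Fin r → ℕ) (p : Fin r → Fin r → ℝ) :
    Measure (Sym2 (Vert n) → Bool) :=
  Measure.pi fun s =>
    (PMF.bernoulli (min (Real.toNNReal (p (Quot.out s).1.1 (Quot.out s).2.1)) 1)
      (min_le_right _ _)).toMeasure

/-- The graph determined by an edge-indicator function. -/
def graphOf {n : Fin r → ℕ} (ω : Sym2 (Vert n) → Bool) : SimpleGraph (Vert n) where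
  Adj u v := u ≠ v ∧ ω s(u, v) = true
  symm := by
    constructor
    intro u v h
    exact ⟨h.1.symm, by rw [Sym2.eq_swap]; exact h.2⟩
  loopless := by constructor; intro u h; exact h.1 rfl

/-- The number of vertices in the connected component of `v`. -/
noncomputable def compSize {n : Fin r → ℕ} (ω : Sym2 (Vert n) → Bool) (v : Vert n) : ℕ :=
  {u | (graphOf ω).Reachable v u}.ncard

/-- The Euclidean norm on `ℝ^r`. -/
noncomputable def euclNorm (z : Fin r → ℝ) : ℝ := Real.sqrt (∑ i, z i ^ 2)

end Pandemic

theorem SimpleGraph.Walk.pow_length_mul_le {V : Type*} {G : SimpleGraph V} {f : V → ℝ} {c : ℝ}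
    (hc : 0 ≤ c) (hstep : ∀ u v, G.Adj u v → c * f u ≤ f v) {u v : V} (p : G.Walk u v) :
    c ^ p.length * f u ≤ f v := by
  induction p with
  | nil => simp
  | @cons a b w hadj p ih =>
    calc c ^ (p.length + 1) * f a = c ^ p.length * (c * f a) := by ring
      _ ≤ c ^ p.length * f b := by gcongr; exact hstep a b hadj
      _ ≤ f w := ih

theorem SimpleGraph.Connected.pow_card_mul_le {V : Type*} [Fintype V] {G : SimpleGraph V}
    (hG : G.Connected) {f : V → ℝ} (hf : ∀ v, 0 ≤ f v) {c : ℝ} (hc₀ : 0 ≤ c) (hc₁ : c ≤ 1)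
    (hstep : ∀ u v, G.Adj u v → c * f u ≤ f v) (u v : V) :
    c ^ Fintype.card V * f u ≤ f v := by
  classical
  let p := (hG u v).some.toPath
  calc c ^ Fintype.card V * f u ≤ c ^ p.1.length * f u :=
        mul_le_mul_of_nonneg_right (pow_le_pow_of_le_one hc₀ hc₁ p.2.length_lt.le) (hf u)
    _ ≤ f v := p.1.pow_length_mul_le hc₀ hstep

section NonnegEigenvector

variable {ι : Type*} [Fintype ι] {M : Matrix ι ι ℝ} {y : ι → ℝ} {t : ℝ}

theorem apply_le_one_of_dotProduct_self_eq_one (hy : ∀ i, 0 ≤ y i) (hy₁ : y ⬝ᵥ y = 1) (i : ι) :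
    y i ≤ 1 := by
  have : y i ^ 2 ≤ 1 := by
    rw [← hy₁, dotProduct]
    simpa only [sq] using Finset.single_le_sum (fun j _ => mul_self_nonneg (y j)) (Finset.mem_univ i)
  exact (sq_le_one_iff₀ (hy i)).mp this

theorem exists_inv_card_le_of_dotProduct_self_eq_one [Nonempty ι] (hy : ∀ i, 0 ≤ y i)
    (hy₁ : y ⬝ᵥ y = 1) : ∃ m, (Fintype.card ι : ℝ)⁻¹ ≤ y m := by
  have hsum : ∑ _i : ι, (Fintype.card ι : ℝ)⁻¹ ≤ ∑ i, y i ^ 2 := by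
    simp [← hy₁, dotProduct, sq]
  obtain ⟨m, -, hm⟩ := Finset.exists_le_of_sum_le Finset.univ_nonempty hsum
  refine ⟨m, hm.trans ?_⟩
  nlinarith [apply_le_one_of_dotProduct_self_eq_one hy hy₁ m, hy m]

theorem mul_le_eigenvalue_mul (hM : ∀ i j, 0 ≤ M i j) (hy : ∀ i, 0 ≤ y i)
    (h : M *ᵥ y = t • y) (i j : ι) : M i j * y j ≤ t * y i := by
  have := congrFun h i
  simp only [mulVec, dotProduct, Pi.smul_apply, smul_eq_mul] at this
  rw [← this]
  exact Finset.single_le_sum (fun k _ => mul_nonneg (hM i k) (hy k)) (Finset.mem_univ j)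

theorem eigenvalue_le_card_sq_mul (hM : ∀ i j, 0 ≤ M i j) {b : ℝ} (hb : ∀ i j, M i j ≤ b)
    (hy : ∀ i, 0 ≤ y i) (hy₁ : y ⬝ᵥ y = 1) (h : M *ᵥ y = t • y) :
    t ≤ Fintype.card ι ^ 2 * b := by
  have hy_le := apply_le_one_of_dotProduct_self_eq_one hy hy₁
  calc t = y ⬝ᵥ (M *ᵥ y) := by rw [h, dotProduct_smul, hy₁, smul_eq_mul, mul_one]
    _ = ∑ i, ∑ j, y i * M i j * y j := by
        simp only [dotProduct, mulVec, Finset.mul_sum, mul_assoc]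
    _ ≤ ∑ _i : ι, ∑ _j : ι, b := by
        gcongr with i _ j _
        calc y i * M i j * y j = M i j * (y i * y j) := by ring
          _ ≤ M i j * 1 := mul_le_mul_of_nonneg_left (mul_le_one₀ (hy_le i) (hy j) (hy_le j)) (hM i j)
          _ ≤ b := (mul_one (M i j)).trans_le (hb i j)
    _ = Fintype.card ι ^ 2 * b := by simp [sq, mul_assoc]

end NonnegEigenvector

namespace Pandemic

variable {r : ℕ}

theorem apply_le_euclNorm (z : Fin r → ℝ) (k : Fin r) : z k ≤ euclNorm z :=
  (le_abs_self _).trans <| Real.abs_le_sqrt <|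
    Finset.single_le_sum (f := fun i => z i ^ 2) (fun i _ => sq_nonneg (z i)) (Finset.mem_univ k)

theorem euclNorm_le_sum_of_nonneg {z : Fin r → ℝ} (hz : ∀ i, 0 ≤ z i) :
    euclNorm z ≤ ∑ i, z i :=
  (Real.sqrt_le_left (Finset.sum_nonneg fun i _ => hz i)).mpr
    (Finset.sum_sq_le_sq_sum_of_nonneg fun i _ => hz i)

noncomputable def perronFloor (ε : ℝ) (r : ℕ) : ℝ := min (ε ^ 2 / r ^ 2) 1 ^ r / r

theorem perronFloor_pos {ε : ℝ} (hε : 0 < ε) (hr : 0 < r) : 0 < perronFloor ε r := by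
  unfold perronFloor
  have : 0 < min (ε ^ 2 / r ^ 2) 1 := lt_min (by positivity) one_pos
  positivity

theorem perronFloor_le_apply {ε : ℝ} (hε : 0 < ε) {Λ : Matrix (Fin r) (Fin r) ℝ}
    (hsymm : Λ.IsSymm) (hΛ : ∀ i j, 0 ≤ Λ i j) (hconn : ConnectedTypes Λ)
    (hsep : Separated ε Λ) {y : Fin r → ℝ} {t : ℝ} (hy : ∀ i, 0 ≤ y i) (hy₁ : y ⬝ᵥ y = 1)
    (h : Λ *ᵥ y = t • y) (k : Fin r) : perronFloor ε r ≤ y k := by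
  have : Nonempty (Fin r) := hconn.nonempty
  have hr : (0 : ℝ) < r := by exact_mod_cast Fin.pos'
  obtain ⟨m, hm⟩ := exists_inv_card_le_of_dotProduct_self_eq_one hy hy₁
  have ht : t ≤ r ^ 2 / ε := by
    have hb : ∀ i j, Λ i j ≤ 1 / ε := fun i j =>
      (hsep i j).elim (fun h0 => h0 ▸ by positivity) And.right
    simpa [div_eq_mul_inv] using eigenvalue_le_card_sq_mul hΛ hb hy hy₁ h
  have hstep : ∀ u v, (typeGraph Λ).Adj u v → ε ^ 2 / r ^ 2 * y u ≤ y v := by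
    rintro u v ⟨-, hpos⟩
    have hvu : 0 < Λ v u := hpos.elim (fun h' => hsymm.apply u v ▸ h') id
    have hε_le : ε ≤ Λ v u := ((hsep v u).resolve_left hvu.ne').1
    have : ε * y u ≤ r ^ 2 / ε * y v :=
      calc ε * y u ≤ Λ v u * y u := mul_le_mul_of_nonneg_right hε_le (hy u)
        _ ≤ t * y v := mul_le_eigenvalue_mul hΛ hy h v u
        _ ≤ r ^ 2 / ε * y v := mul_le_mul_of_nonneg_right ht (hy v)
    calc ε ^ 2 / r ^ 2 * y u = ε / r ^ 2 * (ε * y u) := by ring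
      _ ≤ ε / r ^ 2 * (r ^ 2 / ε * y v) := by gcongr
      _ = y v := by field_simp
  have hc : 0 ≤ min (ε ^ 2 / r ^ 2) 1 := le_min (by positivity) zero_le_one
  calc perronFloor ε r = min (ε ^ 2 / r ^ 2) 1 ^ r * (r : ℝ)⁻¹ := div_eq_mul_inv _ _
    _ ≤ min (ε ^ 2 / r ^ 2) 1 ^ r * y m := by
        gcongr
        simpa using hm
    _ ≤ y k := by
        simpa using hconn.pow_card_mul_le hy hc (min_le_right _ _)
          (fun u v huv => (mul_le_mul_of_nonneg_right (min_le_left _ _) (hy u)).trans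
            (hstep u v huv)) m k

theorem mul_euclNorm_le_perron_component {n : Fin r → ℕ} (hn : ∀ i, 0 < n i) {B : ℝ}
    (hbal : ∀ i j, (n i : ℝ) ≤ B * n j) {y : Fin r → ℝ} {c : ℝ} (hc : 0 ≤ c)
    (hy : ∀ k, c ≤ y k) {z : Fin r → ℝ} (hz : ∀ i, 0 ≤ z i) (k : Fin r) :
    c ^ 2 / √B * euclNorm z ≤
      euclNorm (((fun l => √(n l) * z l) ⬝ᵥ y) • fun k => (√(n k))⁻¹ * y k) := by
  set α := (fun l => √(n l) * z l) ⬝ᵥ y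
  have hnk : 0 < √(n k) := Real.sqrt_pos.mpr (by exact_mod_cast hn k)
  have hB : 0 < √B := Real.sqrt_pos.mpr <| pos_of_mul_pos_left
    ((Nat.cast_pos.mpr (hn k)).trans_le (hbal k k)) (Nat.cast_nonneg _)
  have hα : c * ∑ l, √(n l) * z l ≤ α := by
    rw [Finset.mul_sum]
    refine Finset.sum_le_sum fun l _ => ?_
    rw [mul_comm]
    exact mul_le_mul_of_nonneg_left (hy l) (mul_nonneg (Real.sqrt_nonneg _) (hz l))
  have hratio : ∀ l, z l / √B ≤ √(n l) * z l / √(n k) := fun l => by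
    have hsqrt : √(n k) ≤ √B * √(n l) := by
      rw [← Real.sqrt_mul' _ (Nat.cast_nonneg _)]
      exact Real.sqrt_le_sqrt (hbal k l)
    rw [div_le_div_iff₀ hB hnk]
    nlinarith [hz l]
  calc c ^ 2 / √B * euclNorm z ≤ c ^ 2 / √B * ∑ l, z l := by
        gcongr
        exact euclNorm_le_sum_of_nonneg hz
    _ = c ^ 2 * ∑ l, z l / √B := by rw [← Finset.sum_div]; ring
    _ ≤ c ^ 2 * ∑ l, √(n l) * z l / √(n k) :=
        mul_le_mul_of_nonneg_left (Finset.sum_le_sum fun l _ => hratio l) (sq_nonneg c)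
    _ = (c * ∑ l, √(n l) * z l) * (c / √(n k)) := by rw [← Finset.sum_div]; ring
    _ ≤ α * ((√(n k))⁻¹ * y k) := by
        rw [div_eq_inv_mul]
        exact mul_le_mul hα (mul_le_mul_of_nonneg_left (hy k) (inv_nonneg.mpr hnk.le))
          (by positivity) ((mul_nonneg hc (Finset.sum_nonneg fun l _ =>
            mul_nonneg (Real.sqrt_nonneg _) (hz l))).trans hα)
    _ ≤ euclNorm (α • fun k => (√(n k))⁻¹ * y k) :=
        apply_le_euclNorm (α • fun k => (√(n k))⁻¹ * y k) k

/-- writing a nonnegative vector `z = Σ_j α_j x_j` in the eigenbasis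
`x_j = D^{-1/2} y_j`, the component along the Perron direction is substantial:
`‖α_1 x_1‖₂ ≥ δ ‖z‖₂`. -/
theorem perron_component_lower_bound (A r : ℕ) (ε : ℝ) (hε : 0 < ε) (hr : 0 < r) :
    ∃ δ > 0, ∀ (n : Fin r → ℕ) (Λ : Matrix (Fin r) (Fin r) ℝ),
      (∀ i, 0 < n i) → Λ.IsSymm → (∀ i j, 0 ≤ Λ i j) →
      Balanced A n → ConnectedTypes Λ → Separated ε Λ →
      ∀ (y : Fin r → (Fin r → ℝ)) (θ : Fin r → ℝ),
        (∀ i j, y i ⬝ᵥ y j = if i = j then 1 else 0) →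
        (∀ i, Λ.mulVec (y i) = θ i • y i) →
        (∀ k, 0 ≤ y ⟨0, hr⟩ k) →
        θ ⟨0, hr⟩ = maxEig Λ →
        ∀ z : Fin r → ℝ, (∀ i, 0 ≤ z i) →
          δ * euclNorm z ≤
            euclNorm (((fun l => Real.sqrt (n l) * z l) ⬝ᵥ y ⟨0, hr⟩) •
              fun k => (Real.sqrt (n k))⁻¹ * y ⟨0, hr⟩ k) := by
  have hfloor := perronFloor_pos hε hr
  refine ⟨perronFloor ε r ^ 2 / √((A : ℝ) + 1), by positivity, ?_⟩
  intro n Λ hn hsymm hΛ hbal hconn hsep y θ horth heig hy _ z hz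
  have hy₁ : y ⟨0, hr⟩ ⬝ᵥ y ⟨0, hr⟩ = 1 := by simpa using horth ⟨0, hr⟩ ⟨0, hr⟩
  have hbal' : ∀ i j, (n i : ℝ) ≤ (A + 1) * n j := fun i j => by
    have : (n i : ℝ) ≤ A * n j := by exact_mod_cast hbal i j
    linarith [(n j).cast_nonneg (α := ℝ)]
  exact mul_euclNorm_le_perron_component hn hbal' hfloor.le
    (perronFloor_le_apply hε hsymm hΛ hconn hsep hy hy₁ (heig ⟨0, hr⟩)) hz ⟨0, hr⟩

end Pandemic
end

section
/- For all r ∈ ℕ and ε, η > 0 there exists N ∈ ℕ such that the following holds. Suppose n = n_1+⋯+n_r ≥ N and Λ is ε-separated. Let μ be the law of G ∼ G(n⃗,P), and let ν be the law of the edge-union G ∪ G', where G ∼ G(n⃗,P) and G' ∼ G(n⃗,P') are independent and p'_{i,j} = n^{−1.95}·1[λ_{i,j} > 0]; equivalently, ν is the product Bernoulli measure in which each potential edge between V_i and V_j is present independently with probability p_{i,j} + (1 − p_{i,j})·p'_{i,j}. Then the total variation distance between μ and ν is at most η. -/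
open MeasureTheory Matrix

namespace Pandemic

variable {r : ℕ}

/-!
Le Cam's inequality bounds the `ℓ¹` distance of two probability vectors `F`, `G` by
`2 √(2 (1 - ∑ √(F G)))`, and the Bhattacharyya coefficient `∑ √(F G)` is multiplicative over
product measures. For product Bernoulli measures this gives the bound
`2 √(2 ∑ₑ (1 - BC(pₑ, qₑ)))`. Sprinkling only changes pairs with `λ_{ij} ≥ ε`, where
`p ≥ ε / n`, and raises `p` by at most `δ = n^{-1.95}`, which costs `1 - BC ≤ δ² / p ≤ δ² n / ε`.
Over at most `n²` pairs this totals `n^{-0.9} / ε → 0`.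
-/

section Hellinger

open Finset

variable {α : Type*} [Fintype α]

theorem sum_abs_sub_le_two_mul_sqrt_one_sub_sum_sqrt_mul {F G : α → ℝ}
    (hF0 : ∀ a, 0 ≤ F a) (hG0 : ∀ a, 0 ≤ G a) (hF : ∑ a, F a = 1) (hG : ∑ a, G a = 1) :
    ∑ a, |F a - G a| ≤ 2 * √(2 * (1 - ∑ a, √(F a * G a))) := by
  have hF' a : √(F a) ^ 2 = F a := Real.sq_sqrt (hF0 a)
  have hG' a : √(G a) ^ 2 = G a := Real.sq_sqrt (hG0 a)
  have hFG a : √(F a * G a) = √(F a) * √(G a) := Real.sqrt_mul (hF0 a) _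
  have hsplit a : |F a - G a| = |√(F a) - √(G a)| * (√(F a) + √(G a)) := by
    rw [← abs_of_nonneg (by positivity : 0 ≤ √(F a) + √(G a)), ← abs_mul]
    congr 1
    nlinarith [hF' a, hG' a]
  have hdiff : ∑ a, |√(F a) - √(G a)| ^ 2 = 2 * (1 - ∑ a, √(F a * G a)) := by
    simp only [sq_abs, sub_sq, hF', hG', hFG, sum_add_distrib, sum_sub_distrib, hF, hG]
    simp only [mul_assoc, ← mul_sum]
    ring
  have hsum : ∑ a, (√(F a) + √(G a)) ^ 2 ≤ 2 ^ 2 := by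
    calc ∑ a, (√(F a) + √(G a)) ^ 2 ≤ ∑ a, 2 * (F a + G a) :=
          sum_le_sum fun a _ => by nlinarith [hF' a, hG' a, sq_nonneg (√(F a) - √(G a))]
      _ = 2 ^ 2 := by rw [← mul_sum, sum_add_distrib, hF, hG]; norm_num
  calc ∑ a, |F a - G a| = ∑ a, |√(F a) - √(G a)| * (√(F a) + √(G a)) :=
        sum_congr rfl fun a _ => hsplit a
    _ ≤ √(∑ a, |√(F a) - √(G a)| ^ 2) * √(∑ a, (√(F a) + √(G a)) ^ 2) :=
        Real.sum_mul_le_sqrt_mul_sqrt _ _ _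
    _ ≤ √(2 * (1 - ∑ a, √(F a * G a))) * 2 := by
        rw [hdiff]
        gcongr
        exact Real.sqrt_le_iff.2 ⟨zero_le_two, hsum⟩
    _ = 2 * √(2 * (1 - ∑ a, √(F a * G a))) := mul_comm _ _

theorem abs_measureReal_sub_le_sum_abs [MeasurableSpace α] [MeasurableSingletonClass α]
    (μ ν : Measure α) [IsFiniteMeasure μ] [IsFiniteMeasure ν] (E : Set α) :
    |μ.real E - ν.real E| ≤ ∑ a, |μ.real {a} - ν.real {a}| := by
  classical
  rw [← E.coe_toFinset, ← sum_measureReal_singleton, ← sum_measureReal_singleton,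
    ← sum_sub_distrib]
  exact (abs_sum_le_sum_abs _ _).trans
    (sum_le_univ_sum_of_nonneg fun _ => abs_nonneg _)

end Hellinger

theorem one_sub_prod_le_sum_one_sub {ι : Type*} (s : Finset ι) {a : ι → ℝ}
    (h0 : ∀ i ∈ s, 0 ≤ a i) (h1 : ∀ i ∈ s, a i ≤ 1) :
    1 - ∏ i ∈ s, a i ≤ ∑ i ∈ s, (1 - a i) := by
  induction s using Finset.cons_induction with
  | empty => simp
  | cons i s hi ih =>
    rw [Finset.prod_cons, Finset.sum_cons]
    have hai0 := h0 i (Finset.mem_cons_self i s)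
    have hai1 := h1 i (Finset.mem_cons_self i s)
    have hs := ih (fun j hj => h0 j (Finset.mem_cons_of_mem hj))
      (fun j hj => h1 j (Finset.mem_cons_of_mem hj))
    have hprod : ∏ j ∈ s, a j ≤ 1 :=
      Finset.prod_le_one (fun j hj => h0 j (Finset.mem_cons_of_mem hj))
        (fun j hj => h1 j (Finset.mem_cons_of_mem hj))
    nlinarith

theorem sq_sqrt_sub_sqrt_le {a b : ℝ} (ha : 0 ≤ a) (hab : a ≤ b) :
    (√b - √a) ^ 2 ≤ (b - a) ^ 2 / b := by
  rcases hab.eq_or_lt with rfl | hab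
  · simp
  have hb : 0 < b := ha.trans_lt hab
  rw [le_div_iff₀ hb]
  have hsa := Real.sq_sqrt ha
  have hsb := Real.sq_sqrt hb.le
  have hle : √a ≤ √b := Real.sqrt_le_sqrt hab.le
  have hfactor : (√b - √a) * √b ≤ b - a := by nlinarith [Real.sqrt_nonneg a]
  calc (√b - √a) ^ 2 * b = ((√b - √a) * √b) ^ 2 := by rw [mul_pow, hsb]
    _ ≤ (b - a) ^ 2 := by gcongr

noncomputable def bernoulliOfReal (p : ℝ) : Measure Bool :=
  (PMF.bernoulli (min p.toNNReal 1) (min_le_right _ _)).toMeasure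

instance (p : ℝ) : IsProbabilityMeasure (bernoulliOfReal p) := by
  unfold bernoulliOfReal
  infer_instance

theorem measureReal_bernoulliOfReal_singleton {p : ℝ} (h0 : 0 ≤ p) (h1 : p ≤ 1) (b : Bool) :
    (bernoulliOfReal p).real {b} = cond b p (1 - p) := by
  rw [measureReal_def, bernoulliOfReal,
    PMF.toMeasure_apply_singleton _ _ (measurableSet_singleton _), PMF.bernoulli_apply,
    min_eq_left (Real.toNNReal_le_one.2 h1)]
  cases b
  · simp [Real.toNNReal_le_one.2 h1, h0]
  · simp [h0]

noncomputable def bernoulliAffinity (p q : ℝ) : ℝ := √(p * q) + √((1 - p) * (1 - q))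

theorem bernoulliAffinity_self {p : ℝ} (h0 : 0 ≤ p) (h1 : p ≤ 1) :
    bernoulliAffinity p p = 1 := by
  rw [bernoulliAffinity, Real.sqrt_mul_self h0, Real.sqrt_mul_self (sub_nonneg.2 h1)]
  ring

theorem one_sub_bernoulliAffinity_eq {p q : ℝ} (hp0 : 0 ≤ p) (hp1 : p ≤ 1) (hq0 : 0 ≤ q)
    (hq1 : q ≤ 1) :
    1 - bernoulliAffinity p q = ((√q - √p) ^ 2 + (√(1 - p) - √(1 - q)) ^ 2) / 2 := by
  rw [bernoulliAffinity, Real.sqrt_mul hp0, Real.sqrt_mul (sub_nonneg.2 hp1)]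
  linear_combination (-1 / 2 : ℝ) * (Real.sq_sqrt hp0 + Real.sq_sqrt hq0 +
    Real.sq_sqrt (sub_nonneg.2 hp1) + Real.sq_sqrt (sub_nonneg.2 hq1))

theorem bernoulliAffinity_le_one {p q : ℝ} (hp0 : 0 ≤ p) (hp1 : p ≤ 1) (hq0 : 0 ≤ q)
    (hq1 : q ≤ 1) : bernoulliAffinity p q ≤ 1 := by
  have := one_sub_bernoulliAffinity_eq hp0 hp1 hq0 hq1
  nlinarith [sq_nonneg (√q - √p), sq_nonneg (√(1 - p) - √(1 - q))]

theorem one_sub_bernoulliAffinity_add_mul_le {p δ : ℝ} (hp0 : 0 < p) (hp1 : p ≤ 1) (hδ0 : 0 ≤ δ)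
    (hδ1 : δ ≤ 1) : 1 - bernoulliAffinity p (p + (1 - p) * δ) ≤ δ ^ 2 / p := by
  set q := p + (1 - p) * δ
  have hqp : q - p = (1 - p) * δ := by ring
  have hpq : p ≤ q := by nlinarith
  have hq1 : q ≤ 1 := by nlinarith
  have htrue : (√q - √p) ^ 2 ≤ δ ^ 2 / p :=
    (sq_sqrt_sub_sqrt_le hp0.le hpq).trans
      (div_le_div₀ (sq_nonneg _) (pow_le_pow_left₀ (by linarith) (by nlinarith) 2) hp0 hpq)
  have hfalse : (√(1 - p) - √(1 - q)) ^ 2 ≤ δ ^ 2 := by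
    refine (sq_sqrt_sub_sqrt_le (by linarith) (by linarith)).trans
      (div_le_of_le_mul₀ (by linarith) (sq_nonneg _) ?_)
    rw [show (1 - p) - (1 - q) = (1 - p) * δ by ring]
    nlinarith [mul_nonneg (sub_nonneg.2 hp1) (sq_nonneg δ)]
  have hδp : δ ^ 2 ≤ δ ^ 2 / p := le_div_self (sq_nonneg δ) hp0 hp1
  rw [one_sub_bernoulliAffinity_eq hp0.le hp1 (hp0.le.trans hpq) hq1]
  linarith

theorem abs_measureReal_pi_bernoulliOfReal_sub_le {ι : Type*} [Fintype ι] {p q : ι → ℝ}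
    (hp0 : ∀ s, 0 ≤ p s) (hp1 : ∀ s, p s ≤ 1) (hq0 : ∀ s, 0 ≤ q s) (hq1 : ∀ s, q s ≤ 1)
    (E : Set (ι → Bool)) :
    |(Measure.pi fun s => bernoulliOfReal (p s)).real E -
        (Measure.pi fun s => bernoulliOfReal (q s)).real E| ≤
      2 * √(2 * ∑ s, (1 - bernoulliAffinity (p s) (q s))) := by
  classical
  set μ := Measure.pi fun s => bernoulliOfReal (p s)
  set ν := Measure.pi fun s => bernoulliOfReal (q s)
  have hsingleton {θ : ι → ℝ} (h0 : ∀ s, 0 ≤ θ s) (h1 : ∀ s, θ s ≤ 1) (ω : ι → Bool) :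
      (Measure.pi fun s => bernoulliOfReal (θ s)).real {ω} =
        ∏ s, cond (ω s) (θ s) (1 - θ s) := by
    rw [measureReal_def, Measure.pi_singleton, ENNReal.toReal_prod]
    exact Finset.prod_congr rfl fun s _ => measureReal_bernoulliOfReal_singleton (h0 s) (h1 s) _
  have hweight {θ : ι → ℝ} (h0 : ∀ s, 0 ≤ θ s) (h1 : ∀ s, θ s ≤ 1) (s : ι) (b : Bool) :
      0 ≤ cond b (θ s) (1 - θ s) := by
    cases b <;> simp [h0 s, h1 s]
  have hsum (m : Measure (ι → Bool)) [IsProbabilityMeasure m] : ∑ ω, m.real {ω} = 1 := by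
    rw [sum_measureReal_singleton, Finset.coe_univ, probReal_univ]
  have haffinity : ∑ ω, √(μ.real {ω} * ν.real {ω}) = ∏ s, bernoulliAffinity (p s) (q s) := by
    simp only [μ, ν, hsingleton hp0 hp1, hsingleton hq0 hq1, ← Finset.prod_mul_distrib]
    rw [Finset.sum_congr rfl fun ω _ => Real.sqrt_prod _ fun s _ =>
      mul_nonneg (hweight hp0 hp1 s (ω s)) (hweight hq0 hq1 s (ω s))]
    refine (Fintype.prod_sum (κ := fun _ => Bool)
      fun s b => √(cond b (p s) (1 - p s) * cond b (q s) (1 - q s))).symm.trans ?_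
    exact Finset.prod_congr rfl fun s _ => by simp [bernoulliAffinity]
  calc _ ≤ ∑ ω, |μ.real {ω} - ν.real {ω}| := abs_measureReal_sub_le_sum_abs μ ν E
    _ ≤ 2 * √(2 * (1 - ∑ ω, √(μ.real {ω} * ν.real {ω}))) :=
      sum_abs_sub_le_two_mul_sqrt_one_sub_sum_sqrt_mul (fun _ => measureReal_nonneg)
        (fun _ => measureReal_nonneg) (hsum μ) (hsum ν)
    _ ≤ 2 * √(2 * ∑ s, (1 - bernoulliAffinity (p s) (q s))) := by
      rw [haffinity]
      gcongr
      exact one_sub_prod_le_sum_one_sub _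
        (fun s _ => add_nonneg (Real.sqrt_nonneg _) (Real.sqrt_nonneg _))
        (fun s _ => bernoulliAffinity_le_one (hp0 s) (hp1 s) (hq0 s) (hq1 s))

theorem card_sym2_le_sq (α : Type*) [Fintype α] :
    Fintype.card (Sym2 α) ≤ Fintype.card α ^ 2 := by
  rw [sq, ← Fintype.card_prod]
  exact Fintype.card_le_of_injective (fun s : Sym2 α => Quot.out s) fun a b h => by
    rw [← Quot.out_eq a, ← Quot.out_eq b]
    exact congrArg _ h

theorem div_sum_le_pMat {n : Fin r → ℕ} {Λ : Matrix (Fin r) (Fin r) ℝ} {ε : ℝ}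
    (hn : ∀ i, 0 < n i) (hε : 0 ≤ ε) {i j : Fin r} (hΛ : ε ≤ Λ i j) :
    ε / ((∑ l, n l : ℕ) : ℝ) ≤ pMat n Λ i j := by
  have hle (k : Fin r) : (n k : ℝ) ≤ ((∑ l, n l : ℕ) : ℝ) := by
    exact_mod_cast Finset.single_le_sum (fun l _ => Nat.zero_le (n l)) (Finset.mem_univ k)
  have hpos (k : Fin r) : (0 : ℝ) < n k := by exact_mod_cast hn k
  refine div_le_div₀ (hε.trans hΛ) hΛ (Real.sqrt_pos.2 (mul_pos (hpos i) (hpos j))) ?_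
  exact Real.sqrt_le_iff.2 ⟨(hpos i).le.trans (hle i),
    by nlinarith [hle i, hle j, hpos i, hpos j]⟩

noncomputable def sprinkledMat (n : Fin r → ℕ) (Λ : Matrix (Fin r) (Fin r) ℝ) (δ : ℝ) :
    Fin r → Fin r → ℝ :=
  fun a b => pMat n Λ a b + (1 - pMat n Λ a b) * (if 0 < Λ a b then δ else 0)

section Sprinkling

variable {n : Fin r → ℕ} {Λ : Matrix (Fin r) (Fin r) ℝ} {ε δ : ℝ}

theorem pMat_nonneg (hΛ0 : ∀ i j, 0 ≤ Λ i j) (i j : Fin r) : 0 ≤ pMat n Λ i j :=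
  div_nonneg (hΛ0 i j) (Real.sqrt_nonneg _)

theorem sprinkledMat_mem_Icc (hΛ0 : ∀ i j, 0 ≤ Λ i j) (hple : ∀ i j, pMat n Λ i j ≤ 1)
    (hδ0 : 0 ≤ δ) (hδ1 : δ ≤ 1) (i j : Fin r) : sprinkledMat n Λ δ i j ∈ Set.Icc 0 1 := by
  have hp0 := pMat_nonneg (n := n) hΛ0 i j
  have hp1 := hple i j
  have ht : 0 ≤ (if 0 < Λ i j then δ else 0) ∧ (if 0 < Λ i j then δ else 0) ≤ 1 := by
    split_ifs <;> constructor <;> linarith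
  constructor <;> simp only [sprinkledMat] <;> nlinarith

theorem one_sub_bernoulliAffinity_sprinkledMat_le (hε : 0 < ε) (hn : ∀ i, 0 < n i)
    (hΛ0 : ∀ i j, 0 ≤ Λ i j) (hple : ∀ i j, pMat n Λ i j ≤ 1) (hsep : Separated ε Λ)
    (hδ0 : 0 ≤ δ) (hδ1 : δ ≤ 1) (i j : Fin r) :
    1 - bernoulliAffinity (pMat n Λ i j) (sprinkledMat n Λ δ i j) ≤
      δ ^ 2 * ((∑ l, n l : ℕ) : ℝ) / ε := by
  rcases hsep i j with hzero | ⟨hεΛ, -⟩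
  · have hsame : sprinkledMat n Λ δ i j = pMat n Λ i j := by simp [sprinkledMat, hzero]
    rw [hsame, bernoulliAffinity_self (pMat_nonneg hΛ0 i j) (hple i j), sub_self]
    positivity
  have hp : ε / ((∑ l, n l : ℕ) : ℝ) ≤ pMat n Λ i j := div_sum_le_pMat hn hε.le hεΛ
  have hx : (0 : ℝ) < ((∑ l, n l : ℕ) : ℝ) := by
    exact_mod_cast (hn i).trans_le (Finset.single_le_sum (fun l _ => Nat.zero_le (n l))
      (Finset.mem_univ i))
  have hsprinkled : sprinkledMat n Λ δ i j = pMat n Λ i j + (1 - pMat n Λ i j) * δ := by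
    simp [sprinkledMat, hε.trans_le hεΛ]
  rw [hsprinkled]
  calc _ ≤ δ ^ 2 / pMat n Λ i j :=
        one_sub_bernoulliAffinity_add_mul_le ((div_pos hε hx).trans_le hp) (hple i j) hδ0 hδ1
    _ ≤ δ ^ 2 / (ε / ((∑ l, n l : ℕ) : ℝ)) := by gcongr
    _ = δ ^ 2 * ((∑ l, n l : ℕ) : ℝ) / ε := by rw [div_div_eq_mul_div]

theorem abs_graphMeasure_sub_sprinkled_le (hε : 0 < ε) (hn : ∀ i, 0 < n i)
    (hΛ0 : ∀ i j, 0 ≤ Λ i j) (hple : ∀ i j, pMat n Λ i j ≤ 1) (hsep : Separated ε Λ)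
    (hδ0 : 0 ≤ δ) (hδ1 : δ ≤ 1) (E : Set (Sym2 (Vert n) → Bool)) :
    |(graphMeasure n (pMat n Λ)).real E - (graphMeasure n (sprinkledMat n Λ δ)).real E| ≤
      2 * √(2 * (((∑ l, n l : ℕ) : ℝ) ^ 3 * δ ^ 2 / ε)) := by
  set x : ℝ := ((∑ l, n l : ℕ) : ℝ)
  refine (abs_measureReal_pi_bernoulliOfReal_sub_le (fun _ => pMat_nonneg hΛ0 _ _)
    (fun _ => hple _ _) (fun _ => (sprinkledMat_mem_Icc hΛ0 hple hδ0 hδ1 _ _).1)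
    (fun _ => (sprinkledMat_mem_Icc hΛ0 hple hδ0 hδ1 _ _).2) E).trans ?_
  have hcard : (Fintype.card (Sym2 (Vert n)) : ℝ) ≤ x ^ 2 := by
    have := card_sym2_le_sq (Vert n)
    rw [Fintype.card_sigma] at this
    simpa [x] using (Nat.cast_le (α := ℝ)).2 this
  gcongr
  calc _ ≤ ∑ _s : Sym2 (Vert n), δ ^ 2 * x / ε := Finset.sum_le_sum fun _ _ =>
        one_sub_bernoulliAffinity_sprinkledMat_le hε hn hΛ0 hple hsep hδ0 hδ1 _ _
    _ = Fintype.card (Sym2 (Vert n)) * (δ ^ 2 * x / ε) := by simp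
    _ ≤ x ^ 2 * (δ ^ 2 * x / ε) := by gcongr
    _ = x ^ 3 * δ ^ 2 / ε := by ring

end Sprinkling

open Filter Topology in
/-- the total variation distance between the law of `G ∼ G(n⃗, P)` and the
law of `G ∪ G'` (equivalently, the product Bernoulli measure with parameters
`p_{ij} + (1 - p_{ij})·p'_{ij}` where `p'_{ij} = n^{-1.95}·1[λ_{ij} > 0]`) is at most
`η`. -/
theorem sprinkling_total_variation (r : ℕ) (ε η : ℝ) (hε : 0 < ε) (hη : 0 < η) :
    ∃ N : ℕ, ∀ (n : Fin r → ℕ) (Λ : Matrix (Fin r) (Fin r) ℝ),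
      (∀ i, 0 < n i) → Λ.IsSymm → (∀ i j, 0 ≤ Λ i j) →
      (∀ i j, pMat n Λ i j ≤ 1) →
      N ≤ ∑ l, n l → Separated ε Λ →
      ∀ E : Set (Sym2 (Vert n) → Bool), MeasurableSet E →
        |(graphMeasure n (pMat n Λ) E).toReal -
          (graphMeasure n
            (fun a b => pMat n Λ a b + (1 - pMat n Λ a b) *
              (if 0 < Λ a b then ((∑ l, n l : ℕ) : ℝ) ^ (-(1.95 : ℝ)) else 0))
            E).toReal| ≤ η := by
  have hlim : Tendsto (fun k : ℕ => 2 * √(2 * ((k : ℝ) ^ (-(0.9 : ℝ)) / ε))) atTop (𝓝 0) := by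
    simpa using ((((tendsto_rpow_neg_atTop (by norm_num : (0 : ℝ) < 0.9)).comp
      tendsto_natCast_atTop_atTop).div_const ε).const_mul 2).sqrt.const_mul 2
  obtain ⟨N, hN⟩ := eventually_atTop.1
    ((hlim.eventually (ge_mem_nhds hη)).and (eventually_ge_atTop 1))
  refine ⟨N, fun n Λ hn _ hΛ0 hple hNle hsep E _ => ?_⟩
  obtain ⟨hsmall, hx1⟩ := hN _ hNle
  set x : ℝ := ((∑ l, n l : ℕ) : ℝ)
  have hx : 1 ≤ x := Nat.one_le_cast.2 hx1
  have hpow : x ^ 3 * (x ^ (-(1.95 : ℝ))) ^ 2 = x ^ (-(0.9 : ℝ)) := by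
    rw [← Real.rpow_natCast, ← Real.rpow_natCast (x ^ _), ← Real.rpow_mul (by positivity),
      ← Real.rpow_add (by positivity)]
    norm_num
  calc _ ≤ 2 * √(2 * (x ^ 3 * (x ^ (-(1.95 : ℝ))) ^ 2 / ε)) :=
        abs_graphMeasure_sub_sprinkled_le hε hn hΛ0 hple hsep (by positivity)
          (Real.rpow_le_one_of_one_le_of_nonpos hx (by norm_num)) E
    _ ≤ η := by rwa [hpow]

end Pandemic
end
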